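/- Let d : ℝ → ℝ satisfy the Leibniz rule d(xy) = x·d(y) + y·d(x) for all x, y ∈ ℝ, let 0 ≤ q < p be constants, and let f : ℝ \ (pℤ + q) → ℝ be a differentiable function which is p-antiperiodic, i.e., f(x + p) = −f(x) for all x ∈ ℝ \ (pℤ + q), and such that f'(x) ≠ 0 for all x ∈ ℝ \ (pℤ + q). If d(f(x)) = f'(x)·d(x) holds for all x ∈ ℝ \ (pℤ + q), then d is additive, and hence d is a standard derivation. -/

import Mathlib

/-!
Write `D(a, b) = d (a + b) - d a - d b`. For a Leibniz map `d` the defect `D` is homogeneous,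
`D(s a, s b) = s D(a, b)`, and it is a symmetric 2-cocycle. Differentiating the antiperiodicity
gives `f' (x + p) = -f' x`, so `d ∘ f = f' · d` makes `d` `p`-periodic off the countable set
`pℤ + q`, i.e. `D(x, p) = -d p` there. Symmetry and homogeneity force `d p = 0`; homogeneity
spreads "`D(·, b)` vanishes off a countable set" from `b = p` to every `b`; and the cocycle
identity at a generic third point removes the exceptional sets altogether.
-/

open Set

def IsLeibniz {R : Type*} [Mul R] [Add R] (d : R → R) : Prop :=
  ∀ x y, d (x * y) = x * d y + y * d x

def addDefect {G M : Type*} [Add G] [Sub M] (d : G → M) (a b : G) : M :=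
  d (a + b) - d a - d b

theorem Set.Countable.exists_notMem {α : Type*} [Uncountable α] {s : Set α} (hs : s.Countable) :
    ∃ x, x ∉ s := by
  by_contra! h
  exact not_countable_univ (hs.mono fun x _ ↦ h x)

section AddDefect

variable {G M : Type*} [AddCommGroup G] [AddCommGroup M] (d : G → M)

theorem addDefect_comm (a b : G) : addDefect d a b = addDefect d b a := by
  simp only [addDefect, add_comm a b]; abel

theorem addDefect_add_addDefect (a b c : G) :
    addDefect d a b + addDefect d (a + b) c = addDefect d a (b + c) + addDefect d b c := by
  simp only [addDefect, add_assoc]; abel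

/-- The cocycle identity `D(a, b) + D(a + b, w) = D(a, b + w) + D(b, w)` trades `D(a, b)` for
three defects that vanish for a generic `w`. -/
theorem map_add_of_countable_addDefect [Uncountable G]
    (h : ∀ b, {a | addDefect d a b ≠ 0}.Countable) (a b : G) : d (a + b) = d a + d b := by
  have hshift : {w | addDefect d (b + w) a ≠ 0}.Countable :=
    (h a).preimage (add_right_injective b)
  obtain ⟨w, hw⟩ := (((h b).union (h (a + b))).union hshift).exists_notMem
  simp only [mem_union, mem_ofPred_eq, not_or, not_not, addDefect_comm d w] at hw
  obtain ⟨⟨hbw, habw⟩, hab⟩ := hw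
  have key := addDefect_add_addDefect d a b w
  rw [habw, addDefect_comm d a (b + w), hab, hbw, add_zero, add_zero] at key
  simpa only [addDefect, sub_sub, sub_eq_zero] using key

end AddDefect

namespace IsLeibniz

section CommRing

variable {R : Type*} [CommRing R] {d : R → R}

theorem map_zero (hd : IsLeibniz d) : d 0 = 0 := by
  simpa using hd 0 0

theorem map_neg [NoZeroDivisors R] [CharZero R] (hd : IsLeibniz d) (x : R) : d (-x) = -d x := by
  have h1 : d 1 = 0 := by simpa using hd 1 1
  have h2 : (2 : R) * d (-1) = 0 := by
    have := hd (-1) (-1)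
    rw [neg_mul_neg, one_mul, h1] at this
    linear_combination this
  have hneg1 : d (-1) = 0 := (mul_eq_zero.1 h2).resolve_left two_ne_zero
  simpa [hneg1] using hd (-1) x

theorem addDefect_zero_right (hd : IsLeibniz d) (a : R) : addDefect d a 0 = 0 := by
  simp [addDefect, hd.map_zero]

theorem addDefect_mul_mul (hd : IsLeibniz d) (s a b : R) :
    addDefect d (s * a) (s * b) = s * addDefect d a b := by
  simp only [addDefect, ← mul_add, hd s]
  ring

end CommRing

section Field

variable {K : Type*} [Field K] {d : K → K}

theorem addDefect_eq_div_mul (hd : IsLeibniz d) {a b : K} (ha : a ≠ 0) (x : K) :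
    addDefect d x b = b / a * addDefect d (a * x / b) a := by
  rcases eq_or_ne b 0 with rfl | hb
  · simp [hd.addDefect_zero_right]
  · rw [← hd.addDefect_mul_mul]
    congr 1 <;> field_simp

theorem countable_addDefect_ne_zero (hd : IsLeibniz d) {a : K} (ha : a ≠ 0)
    (h : {x | addDefect d x a ≠ 0}.Countable) (b : K) : {x | addDefect d x b ≠ 0}.Countable := by
  rcases eq_or_ne b 0 with rfl | hb
  · simp [hd.addDefect_zero_right]
  · have hinj : Function.Injective fun x : K ↦ a * x / b := fun x y hxy ↦ by
      simpa [ha, hb] using hxy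
    refine (h.preimage hinj).mono fun x hx ↦ ?_
    rw [mem_ofPred_eq, hd.addDefect_eq_div_mul ha] at hx
    exact right_ne_zero_of_mul hx

/-- Symmetry of the defect against its homogeneity: `c = D(x, a) = D(a, x) = (x / a) D(a² / x, a)
= (x / a) c` for a generic `x`. -/
theorem eq_zero_of_countable_addDefect_ne [Uncountable K] (hd : IsLeibniz d) {a c : K}
    (ha : a ≠ 0) (h : {x | addDefect d x a ≠ c}.Countable) : c = 0 := by
  have hinv : Function.Injective fun y : K ↦ a * a / y :=
    Function.Involutive.injective fun y ↦ div_div_cancel₀ (mul_ne_zero ha ha)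
  obtain ⟨x, hx⟩ := ((h.union (h.preimage hinv)).insert a).exists_notMem
  simp only [mem_insert_iff, mem_union, mem_preimage, mem_ofPred_eq, not_or, not_not] at hx
  obtain ⟨hxa, hx, hax⟩ := hx
  have : c = x / a * c :=
    calc c = addDefect d a x := by rw [addDefect_comm, hx]
      _ = x / a * c := by rw [hd.addDefect_eq_div_mul ha, hax]
  have hxa' : x / a ≠ 1 := by rwa [ne_eq, div_eq_one_iff_eq ha]
  by_contra hc
  exact hxa' (mul_eq_right₀ hc |>.1 this.symm)

end Field

end IsLeibniz

theorem deriv_add_eq_neg_of_antiperiodicOn {𝕜 F : Type*} [NontriviallyNormedField 𝕜]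
    [NormedAddCommGroup F] [NormedSpace 𝕜 F] {f : 𝕜 → F} {p x : 𝕜} {U : Set 𝕜} (hU : IsOpen U)
    (hper : ∀ y ∈ U, f (y + p) = -f y) (hx : x ∈ U) : deriv f (x + p) = -deriv f x := by
  have hev : (fun y ↦ f (y + p)) =ᶠ[nhds x] fun y ↦ -f y :=
    Filter.mem_of_superset (hU.mem_nhds hx) hper
  rw [← deriv_comp_add_const, hev.deriv_eq, deriv.fun_neg]

theorem IsLeibniz.map_add_eq_of_antiperiodicOn {d f : ℝ → ℝ} {p x : ℝ} {U : Set ℝ}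
    (hd : IsLeibniz d) (hU : IsOpen U) (hper : ∀ y ∈ U, f (y + p) = -f y)
    (hdf : ∀ y ∈ U, d (f y) = deriv f y * d y) (hx : x ∈ U) (hxp : x + p ∈ U)
    (hf' : deriv f x ≠ 0) : d (x + p) = d x := by
  have h := hdf _ hxp
  rw [hper x hx, hd.map_neg, hdf x hx, deriv_add_eq_neg_of_antiperiodicOn hU hper hx,
    neg_mul, neg_inj] at h
  exact (mul_left_cancel₀ hf' h).symm

theorem isClosed_setOf_eq_mul_intCast_add {p : ℝ} (hp : p ≠ 0) (q : ℝ) :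
    IsClosed {x : ℝ | ∃ k : ℤ, x = p * k + q} := by
  have : {x : ℝ | ∃ k : ℤ, x = p * k + q} =
      (fun x ↦ (x - q) / p) ⁻¹' range ((↑) : ℤ → ℝ) := by
    ext x
    simp only [mem_ofPred_eq, mem_preimage, mem_range, eq_div_iff hp]
    exact exists_congr fun k ↦ by constructor <;> intro h <;> linarith
  rw [this]
  exact Int.isClosedEmbedding_coe_real.isClosed_range.preimage (by fun_prop)

theorem additive_of_leibniz_of_antiperiodic_general
    (d : ℝ → ℝ) (hleib : ∀ x y : ℝ, d (x * y) = x * d y + y * d x)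
    (p q : ℝ) (hq : 0 ≤ q) (hqp : q < p)
    (f : ℝ → ℝ)
    (hper : ∀ x : ℝ, (¬ ∃ k : ℤ, x = p * k + q) → f (x + p) = -f x)
    (hf' : ∀ x : ℝ, (¬ ∃ k : ℤ, x = p * k + q) → deriv f x ≠ 0)
    (hdf : ∀ x : ℝ, (¬ ∃ k : ℤ, x = p * k + q) → d (f x) = deriv f x * d x) :
    ∀ x y : ℝ, d (x + y) = d x + d y := by
  have hd : IsLeibniz d := hleib
  have hp : p ≠ 0 := (hq.trans_lt hqp).ne'
  set S := {x : ℝ | ∃ k : ℤ, x = p * k + q}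
  have hS : S.Countable :=
    (countable_range fun k : ℤ ↦ p * k + q).mono fun _ ⟨k, hk⟩ ↦ mem_range.2 ⟨k, hk.symm⟩
  have hshift : ∀ x ∉ S, x + p ∉ S := by
    rintro x hx ⟨k, hk⟩
    exact hx ⟨k - 1, by push_cast; linarith⟩
  have hopen : IsOpen Sᶜ := (isClosed_setOf_eq_mul_intCast_add hp q).isOpen_compl
  have hdefect : ∀ x ∉ S, addDefect d x p = -d p := fun x hx ↦ by
    rw [addDefect, hd.map_add_eq_of_antiperiodicOn hopen hper hdf hx (hshift x hx) (hf' x hx)]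
    ring
  have hdp : -d p = 0 := hd.eq_zero_of_countable_addDefect_ne hp <| hS.mono fun x hx ↦ by
    by_contra hxS; exact hx (hdefect x hxS)
  have hcount : {x | addDefect d x p ≠ 0}.Countable := hS.mono fun x hx ↦ by
    by_contra hxS; exact hx (hdefect x hxS ▸ hdp)
  exact map_add_of_countable_addDefect d (hd.countable_addDefect_ne_zero hp hcount)

/-- If `d : ℝ → ℝ` satisfies the Leibniz rule, `0 ≤ q < p`, `f` is a differentiable
`p`-antiperiodic function on `ℝ \ (pℤ + q)` with nonvanishing derivative, and `d` is a
derivation with respect to `f`, then `d` is additive, hence a standard derivation. -/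
theorem additive_of_leibniz_of_antiperiodic
    (d : ℝ → ℝ) (hleib : ∀ x y : ℝ, d (x * y) = x * d y + y * d x)
    (p q : ℝ) (hq : 0 ≤ q) (hqp : q < p)
    (f : ℝ → ℝ)
    (hf : ∀ x : ℝ, (¬ ∃ k : ℤ, x = p * k + q) → DifferentiableAt ℝ f x)
    (hper : ∀ x : ℝ, (¬ ∃ k : ℤ, x = p * k + q) → f (x + p) = -f x)
    (hf' : ∀ x : ℝ, (¬ ∃ k : ℤ, x = p * k + q) → deriv f x ≠ 0)
    (hdf : ∀ x : ℝ, (¬ ∃ k : ℤ, x = p * k + q) → d (f x) = deriv f x * d x) :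
    ∀ x y : ℝ, d (x + y) = d x + d y :=
  additive_of_leibniz_of_antiperiodic_general d hleib p q hq hqp f hper hf' hdf
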